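/- arXiv:2407.17682 — 2 statements merged into one kernel-verified Lean document; each statement's English description precedes it below -/
import Mathlib

section
/- Let X be a finite nonempty set, E ⊆ X × X strongly connected, C, F_1, …, F_K : E → ℝ with F_1, …, F_K linearly independent modulo N, let 𝔈 be the exponential family generated by C, F_1, …, F_K, and let μ_1, …, μ_K ∈ ℝ with mixture family M = M(μ_1,…,μ_K). If w_* ∈ M ∩ 𝔈, then for any w ∈ M and any v ∈ 𝔈, the Pythagorean relation D(w|w_*) + D(w_*|v) = D(w|v) holds, where D(v|w) = Σ_{(x,y)∈E} p_v^{(2)}(x,y) log(v(y|x)/w(y|x)). -/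
open scoped Classical
open Finset

/-- A (row-stochastic) Markov kernel on a finite set `X`: `w x y` means `w(y|x)`. -/
def IsMarkovKernel {X : Type*} [Fintype X] (w : X → X → ℝ) : Prop :=
  (∀ x y : X, 0 ≤ w x y) ∧ ∀ x : X, ∑ y : X, w x y = 1

/-- The directed graph `(X, E)` is strongly connected: from any `x` there is a
finite directed path along edges of `E` to any `y`. -/
def StronglyConnected {X : Type*} (E : Set (X × X)) : Prop :=
  ∀ x y : X, Relation.ReflTransGen (fun a b => (a, b) ∈ E) x y

/-- Membership in `W(X,E)`: a Markov kernel whose support is exactly `E`. -/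
def MemW {X : Type*} [Fintype X] (E : Set (X × X)) (w : X → X → ℝ) : Prop :=
  IsMarkovKernel w ∧ ∀ x y : X, 0 < w x y ↔ (x, y) ∈ E

/-- `p` is a stationary probability distribution of the kernel `w`. -/
def IsStationaryDistrib {X : Type*} [Fintype X] (w : X → X → ℝ) (p : X → ℝ) : Prop :=
  (∀ x : X, 0 ≤ p x) ∧ (∑ x : X, p x = 1) ∧ ∀ y : X, ∑ x : X, p x * w x y = p y

/-- The stationary distribution `p_w` of `w` (unique for `w ∈ W(X,E)` with
`(X,E)` strongly connected), obtained by choice from existence. -/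
noncomputable def statDist {X : Type*} [Fintype X] (w : X → X → ℝ) : X → ℝ :=
  if h : ∃ p : X → ℝ, IsStationaryDistrib w p then h.choose else fun _ => 0

/-- The divergence rate `D(v|w) = Σ_{(x,y)∈E} p_v(x) v(y|x) log (v(y|x)/w(y|x))`. -/
noncomputable def divRate {X : Type*} [Fintype X] (E : Set (X × X))
    (v w : X → X → ℝ) : ℝ :=
  ∑ x : X, ∑ y : X,
    if (x, y) ∈ E then statDist v x * v x y * Real.log (v x y / w x y) else 0

/-- `F_1, …, F_K` are linearly independent modulo
`N = {(x,y) ↦ κ(y) − κ(x) − c}` (as functions on `E`). -/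
def LinIndepModN {X : Type*} (E : Set (X × X)) {K : ℕ} (F : Fin K → X → X → ℝ) : Prop :=
  ∀ a : Fin K → ℝ,
    (∃ (κ : X → ℝ) (c : ℝ), ∀ x y : X, (x, y) ∈ E →
      ∑ k : Fin K, a k * F k x y = κ y - κ x - c) →
    a = 0

/-- Membership in the exponential family generated by `C, F_1, …, F_K`. -/
def MemExpFam {X : Type*} [Fintype X] (E : Set (X × X)) {K : ℕ}
    (C : X → X → ℝ) (F : Fin K → X → X → ℝ) (w : X → X → ℝ) : Prop :=
  MemW E w ∧ ∃ (θ : Fin K → ℝ) (κ : X → ℝ) (ψ : ℝ), ∀ x y : X, (x, y) ∈ E →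
    w x y = Real.exp (C x y + ∑ k : Fin K, θ k * F k x y + κ y - κ x - ψ)

/-- Membership in the mixture family `M(μ_1,…,μ_K)`:
`Σ_{(x,y)∈E} p_w(x) w(y|x) F_k(x,y) = μ_k` for all `k`. -/
def MemMix {X : Type*} [Fintype X] (E : Set (X × X)) {K : ℕ}
    (F : Fin K → X → X → ℝ) (μ : Fin K → ℝ) (w : X → X → ℝ) : Prop :=
  MemW E w ∧ ∀ k : Fin K,
    (∑ x : X, ∑ y : X, if (x, y) ∈ E then statDist w x * w x y * F k x y else 0) = μ k


private lemma exists_stationary' {X : Type*} [Fintype X] [Nonempty X] (w : X → X → ℝ)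
    (hw : IsMarkovKernel w) : ∃ p : X → ℝ, IsStationaryDistrib w p := by
  obtain ⟨hnn, hrow⟩ := hw
  have hdet : (Matrix.of w - 1 : Matrix X X ℝ).det = 0 := by
    rw [← Matrix.exists_mulVec_eq_zero_iff]
    refine ⟨fun _ => 1, ?_, ?_⟩
    · intro h
      have := congrFun h (Classical.arbitrary X)
      simp at this
    · funext x
      simp [Matrix.sub_mulVec, Matrix.mulVec, dotProduct, hrow, Matrix.one_apply]
  obtain ⟨vv, hv0, hv⟩ := Matrix.exists_vecMul_eq_zero_iff.mpr hdet
  have hst : ∀ j, ∑ i, vv i * w i j = vv j := by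
    intro j
    have h := congrFun hv j
    simp [Matrix.vecMul_sub, Matrix.vecMul_one, Matrix.vecMul, dotProduct,
      Matrix.one_apply, mul_sub, Finset.sum_sub_distrib, mul_ite, mul_one, mul_zero,
      sub_eq_zero] at h
    exact h
  set u : X → ℝ := fun i => |vv i| with hu
  have hle : ∀ j, u j ≤ ∑ i, u i * w i j := by
    intro j
    calc u j = |∑ i, vv i * w i j| := by rw [hst j]
    _ ≤ ∑ i, |vv i * w i j| := Finset.abs_sum_le_sum_abs _ _
    _ = ∑ i, u i * w i j := by
        refine Finset.sum_congr rfl fun i _ => ?_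
        rw [abs_mul, abs_of_nonneg (hnn i j)]
  have hsum : ∑ j, ∑ i, u i * w i j = ∑ j, u j := by
    rw [Finset.sum_comm]
    refine Finset.sum_congr rfl fun i _ => ?_
    rw [← Finset.mul_sum, hrow i, mul_one]
  have heq : ∀ j, u j = ∑ i, u i * w i j :=
    fun j => (Finset.sum_eq_sum_iff_of_le (fun j _ => hle j)).1 hsum.symm j (Finset.mem_univ j)
  have hspos : 0 < ∑ i, u i := by
    obtain ⟨i, hi⟩ := Function.ne_iff.mp hv0
    exact Finset.sum_pos' (fun i _ => abs_nonneg _) ⟨i, Finset.mem_univ i, abs_pos.2 hi⟩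
  set s := ∑ i, u i
  refine ⟨fun i => u i / s, fun i => div_nonneg (abs_nonneg _) hspos.le, ?_, ?_⟩
  · rw [← Finset.sum_div, div_self hspos.ne']
  · intro y
    calc ∑ x, u x / s * w x y = (∑ x, u x * w x y) / s := by
          rw [Finset.sum_div]
          exact Finset.sum_congr rfl fun x _ => by ring
    _ = u y / s := by rw [← heq y]

private lemma statDist_spec' {X : Type*} [Fintype X] [Nonempty X] (w : X → X → ℝ)
    (hw : IsMarkovKernel w) : IsStationaryDistrib w (statDist w) := by
  have h : ∃ p : X → ℝ, IsStationaryDistrib w p := exists_stationary' w hw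
  simp only [statDist, dif_pos h]
  exact h.choose_spec

private lemma eval_sum' {X : Type*} [Fintype X] [Nonempty X] (E : Set (X × X)) {K : ℕ}
    (F : Fin K → X → X → ℝ) (u : X → X → ℝ) (p : X → ℝ)
    (hu : MemW E u) (hp : IsStationaryDistrib u p)
    (d : Fin K → ℝ) (Δ : X → ℝ) (c : ℝ) :
    ∑ x : X, ∑ y : X,
        (if (x, y) ∈ E then p x * u x y * ((∑ k : Fin K, d k * F k x y) + Δ y - Δ x - c) else 0)
      = (∑ k : Fin K, d k *
          (∑ x : X, ∑ y : X, if (x, y) ∈ E then p x * u x y * F k x y else 0)) - c := by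
  have hz : ∀ x y, (x, y) ∉ E → u x y = 0 := by
    intro x y hxy
    rcases (hu.1.1 x y).lt_or_eq with h | h
    · exact absurd ((hu.2 x y).1 h) hxy
    · exact h.symm
  have A : ∀ g : X → X → ℝ,
      (∑ x : X, ∑ y : X, if (x, y) ∈ E then p x * u x y * g x y else 0)
        = ∑ x : X, ∑ y : X, p x * u x y * g x y := by
    intro g
    refine Finset.sum_congr rfl fun x _ => Finset.sum_congr rfl fun y _ => ?_
    by_cases h : (x, y) ∈ E
    · simp [h]
    · simp [h, hz x y h]
  have hΔy : ∑ x : X, ∑ y : X, p x * u x y * Δ y = ∑ y : X, p y * Δ y := by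
    rw [Finset.sum_comm]
    refine Finset.sum_congr rfl fun y _ => ?_
    rw [← hp.2.2 y, Finset.sum_mul]
  have hΔx : ∑ x : X, ∑ y : X, p x * u x y * Δ x = ∑ x : X, p x * Δ x := by
    refine Finset.sum_congr rfl fun x _ => ?_
    have h1 : ∑ y : X, p x * u x y * Δ x = p x * Δ x * ∑ y : X, u x y := by
      rw [Finset.mul_sum]
      exact Finset.sum_congr rfl fun y _ => by ring
    rw [h1, hu.1.2 x, mul_one]
  have hone : ∑ x : X, ∑ y : X, p x * u x y = 1 := by
    have h1 : ∀ x, ∑ y : X, p x * u x y = p x := fun x => by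
      rw [← Finset.mul_sum, hu.1.2 x, mul_one]
    simp only [h1]
    exact hp.2.1
  have expand : ∀ x y : X, p x * u x y * ((∑ k : Fin K, d k * F k x y) + Δ y - Δ x - c)
      = (∑ k : Fin K, d k * (p x * u x y * F k x y)) + p x * u x y * Δ y
        - p x * u x y * Δ x - c * (p x * u x y) := by
    intro x y
    have hS : p x * u x y * ∑ k : Fin K, d k * F k x y
        = ∑ k : Fin K, d k * (p x * u x y * F k x y) := by
      rw [Finset.mul_sum]
      exact Finset.sum_congr rfl fun k _ => by ring
    rw [mul_sub, mul_sub, mul_add, hS]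
    ring
  have swap : ∑ x : X, ∑ y : X, ∑ k : Fin K, d k * (p x * u x y * F k x y)
      = ∑ k : Fin K, d k * ∑ x : X, ∑ y : X, p x * u x y * F k x y := by
    have e1 : ∀ x : X, ∑ y : X, ∑ k : Fin K, d k * (p x * u x y * F k x y)
        = ∑ k : Fin K, ∑ y : X, d k * (p x * u x y * F k x y) := fun x => Finset.sum_comm
    simp only [e1]
    rw [Finset.sum_comm]
    exact Finset.sum_congr rfl fun k _ => by simp [Finset.mul_sum]
  rw [A]
  simp only [expand, Finset.sum_add_distrib, Finset.sum_sub_distrib, ← Finset.mul_sum]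
  rw [swap, hΔy, hΔx]
  have hone' : ∑ i : X, p i * ∑ j : X, u i j = 1 := by
    simp only [hu.1.2, mul_one]
    exact hp.2.1
  rw [hone', mul_one]
  have AF : ∀ k : Fin K,
      (∑ x : X, ∑ y : X, if (x, y) ∈ E then p x * u x y * F k x y else 0)
        = ∑ x : X, ∑ y : X, p x * u x y * F k x y := fun k => A (F k)
  simp only [AF]
  ring

/-- the generalized Pythagorean relation for Markov chains. -/
theorem stmt_9 {X : Type*} [Fintype X] [Nonempty X] (E : Set (X × X))
    (hE : StronglyConnected E) (K : ℕ)
    (C : X → X → ℝ) (F : Fin K → X → X → ℝ) (hF : LinIndepModN E F)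
    (μ : Fin K → ℝ) (wstar w v : X → X → ℝ)
    (hstar : MemMix E F μ wstar ∧ MemExpFam E C F wstar)
    (hw : MemMix E F μ w) (hv : MemExpFam E C F v) :
    divRate E w wstar + divRate E wstar v = divRate E w v := by
  obtain ⟨⟨hwsW, hwsμ⟩, _, θs, κs, ψs, hexps⟩ := hstar
  obtain ⟨hwW, hwμ⟩ := hw
  obtain ⟨hvW, θv, κv, ψv, hexpv⟩ := hv
  have hlog : ∀ x y : X, (x, y) ∈ E → Real.log (v x y / wstar x y)
      = (∑ k : Fin K, (θv k - θs k) * F k x y) + (κv y - κs y) - (κv x - κs x) - (ψv - ψs) := by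
    intro x y hxy
    rw [hexpv x y hxy, hexps x y hxy, ← Real.exp_sub, Real.log_exp]
    have hs : ∑ k : Fin K, (θv k - θs k) * F k x y
        = (∑ k : Fin K, θv k * F k x y) - ∑ k : Fin K, θs k * F k x y := by
      rw [← Finset.sum_sub_distrib]
      exact Finset.sum_congr rfl fun k _ => by ring
    rw [hs]
    ring
  have hS : ∀ u : X → X → ℝ, MemW E u →
      (∀ k : Fin K, (∑ x : X, ∑ y : X,
          if (x, y) ∈ E then statDist u x * u x y * F k x y else 0) = μ k) →
      (∑ x : X, ∑ y : X,
          if (x, y) ∈ E then statDist u x * u x y * Real.log (v x y / wstar x y) else 0)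
        = (∑ k : Fin K, (θv k - θs k) * μ k) - (ψv - ψs) := by
    intro u hu hμ
    have key := eval_sum' E F u (statDist u) hu (statDist_spec' u hu.1)
      (fun k => θv k - θs k) (fun x => κv x - κs x) (ψv - ψs)
    simp only [hμ] at key
    have e0 : (∑ x : X, ∑ y : X,
        if (x, y) ∈ E then statDist u x * u x y * Real.log (v x y / wstar x y) else 0)
        = ∑ x : X, ∑ y : X, (if (x, y) ∈ E then statDist u x * u x y *
          ((∑ k : Fin K, (fun k => θv k - θs k) k * F k x y)
            + (fun x => κv x - κs x) y - (fun x => κv x - κs x) x - (ψv - ψs)) else 0) := by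
      refine Finset.sum_congr rfl fun x _ => Finset.sum_congr rfl fun y _ => ?_
      by_cases h : (x, y) ∈ E
      · simp only [if_pos h, hlog x y h]
      · simp [h]
    rw [e0, key]
  have hL1 : ∀ u : X → X → ℝ, MemW E u → divRate E u wstar - divRate E u v
      = ∑ x : X, ∑ y : X,
          if (x, y) ∈ E then statDist u x * u x y * Real.log (v x y / wstar x y) else 0 := by
    intro u hu
    unfold divRate
    rw [← Finset.sum_sub_distrib]
    refine Finset.sum_congr rfl fun x _ => ?_
    rw [← Finset.sum_sub_distrib]
    refine Finset.sum_congr rfl fun y _ => ?_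
    by_cases h : (x, y) ∈ E
    · have hup := (hu.2 x y).2 h
      have hsp := (hwsW.2 x y).2 h
      have hvp := (hvW.2 x y).2 h
      simp only [if_pos h]
      rw [Real.log_div hup.ne' hsp.ne', Real.log_div hup.ne' hvp.ne',
        Real.log_div hvp.ne' hsp.ne']
      ring
    · simp [h]
  have h3 : divRate E wstar wstar = 0 := by
    unfold divRate
    refine Finset.sum_eq_zero fun x _ => Finset.sum_eq_zero fun y _ => ?_
    by_cases h : (x, y) ∈ E
    · have hsp := (hwsW.2 x y).2 h
      simp [h, div_self hsp.ne']
    · simp [h]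
  have h1 := hL1 w hwW
  have h2 := hL1 wstar hwsW
  have hSw := hS w hwW hwμ
  have hSs := hS wstar hwsW hwsμ
  linarith
end

section
/- Let X be a finite nonempty set, H : X × X → ℝ any function, and r a strictly positive probability distribution on X. Then there exist functions κ : X → ℝ and δ : X → ℝ such that w(y|x) = exp(H(x,y) + κ(y) − κ(x) − δ(y)) satisfies Σ_{y∈X} w(y|x) = 1 for every x ∈ X (so w is a strictly positive Markov kernel on X), and r is a stationary distribution of w: Σ_{x∈X} w(y|x) r(x) = r(y) for all y ∈ X. -/
open scoped Classical
open Finset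

set_option maxHeartbeats 2000000 in
private theorem aux_scaling {X : Type*} [Fintype X] [Nonempty X] (H : X → X → ℝ)
    (r : X → ℝ) (hr : ∀ x : X, 0 < r x) (hrsum : ∑ x : X, r x = 1) :
    ∃ f : X → ℝ, ∀ x' : X,
      ∑ y : X, r y * ((r x' * Real.exp (H x' y) * Real.exp (f x')) /
        (∑ x : X, r x * Real.exp (H x y) * Real.exp (f x))) = r x' := by
  classical
  obtain ⟨x₀⟩ := (inferInstance : Nonempty X)
  set M : X → X → ℝ := fun x y => r x * Real.exp (H x y) with hMdef
  have hMpos : ∀ x y, 0 < M x y := fun x y => mul_pos (hr x) (Real.exp_pos _)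
  have hDpos : ∀ (y : X) (g : X → ℝ), (0:ℝ) < ∑ x : X, M x y * Real.exp (g x) :=
    fun y g => Finset.sum_pos (fun x _ => mul_pos (hMpos x y) (Real.exp_pos _)) univ_nonempty
  set G : (X → ℝ) → ℝ := fun f =>
    (∑ y : X, r y * Real.log (∑ x : X, M x y * Real.exp (f x))) - ∑ x : X, r x * f x
    with hGdef
  -- continuity
  have hGc : Continuous G := by
    apply Continuous.sub
    · apply continuous_finset_sum
      intro y _
      exact continuous_const.mul ((continuous_finset_sum _ fun x _ =>
        continuous_const.mul ((continuous_apply x).rexp)).log (fun g => (hDpos y g).ne'))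
    · exact continuous_finset_sum _ fun x _ => continuous_const.mul (continuous_apply x)
  -- minima of r and M
  obtain ⟨xr, -, hxr⟩ := Finset.exists_min_image univ r ⟨x₀, mem_univ _⟩
  set ρ : ℝ := r xr with hρdef
  have hρpos : 0 < ρ := hr xr
  obtain ⟨pm, -, hpm⟩ := Finset.exists_min_image (univ ×ˢ univ) (fun p : X × X => M p.1 p.2)
    ⟨(x₀, x₀), by simp⟩
  set m : ℝ := M pm.1 pm.2 with hmdef
  have hm : ∀ x y, m ≤ M x y := fun x y => hpm (x, y) (by simp)
  have hmpos : 0 < m := hMpos _ _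
  -- Claim 1 : lower bound via a single coordinate
  have claim1 : ∀ (f : X → ℝ) (a : X), Real.log m + f a - ∑ x : X, r x * f x ≤ G f := by
    intro f a
    have hlog : ∀ y : X, Real.log m + f a ≤ Real.log (∑ x : X, M x y * Real.exp (f x)) := by
      intro y
      have h1 : m * Real.exp (f a) ≤ ∑ x : X, M x y * Real.exp (f x) := by
        calc m * Real.exp (f a) ≤ M a y * Real.exp (f a) :=
              mul_le_mul_of_nonneg_right (hm a y) (Real.exp_pos _).le
          _ ≤ ∑ x : X, M x y * Real.exp (f x) :=
              Finset.single_le_sum (fun x _ => (mul_pos (hMpos x y) (Real.exp_pos _)).le)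
                (mem_univ a)
      calc Real.log m + f a = Real.log (m * Real.exp (f a)) := by
            rw [Real.log_mul hmpos.ne' (Real.exp_ne_zero _), Real.log_exp]
        _ ≤ _ := Real.log_le_log (mul_pos hmpos (Real.exp_pos _)) h1
    have : ∑ y : X, r y * (Real.log m + f a) ≤ ∑ y : X, r y * Real.log (∑ x : X, M x y * Real.exp (f x)) :=
      Finset.sum_le_sum fun y _ => mul_le_mul_of_nonneg_left (hlog y) (hr y).le
    have h2 : ∑ y : X, r y * (Real.log m + f a) = Real.log m + f a := by
      rw [← Finset.sum_mul, hrsum, one_mul]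
    simp only [hGdef]
    linarith [this, h2.symm ▸ this]
  -- coercivity on the slice f x₀ = 0
  have coercive : ∀ f : X → ℝ, f x₀ = 0 → ∀ x : X, Real.log m + ρ * |f x| ≤ G f := by
    intro f hf0 x
    obtain ⟨a, -, ha⟩ := Finset.exists_max_image univ f ⟨x₀, mem_univ _⟩
    obtain ⟨b, -, hb⟩ := Finset.exists_min_image univ f ⟨x₀, mem_univ _⟩
    have ha' : ∀ z, f z ≤ f a := fun z => ha z (mem_univ z)
    have hb' : ∀ z, f b ≤ f z := fun z => hb z (mem_univ z)
    have h1 : ∑ x : X, r x * (f a - f x) = f a - ∑ x : X, r x * f x := by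
      simp only [mul_sub]
      rw [Finset.sum_sub_distrib, ← Finset.sum_mul, hrsum, one_mul]
    have h2 : ρ * (f a - f b) ≤ ∑ z : X, r z * (f a - f z) := by
      calc ρ * (f a - f b) ≤ r b * (f a - f b) :=
            mul_le_mul_of_nonneg_right (hxr b (mem_univ b)) (by linarith [ha' b])
        _ ≤ ∑ z : X, r z * (f a - f z) :=
            Finset.single_le_sum (f := fun z => r z * (f a - f z))
              (fun z _ => mul_nonneg (hr z).le (by linarith [ha' z])) (mem_univ b)
    have h3 : |f x| ≤ f a - f b := by
      have h4 : 0 ≤ f a := hf0 ▸ ha' x₀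
      have h5 : f b ≤ 0 := hf0 ▸ hb' x₀
      rw [abs_le]
      constructor <;> [linarith [ha' x, hb' x]; linarith [ha' x, hb' x]]
    have hcl := claim1 f a
    have hmul : ρ * |f x| ≤ ρ * (f a - f b) := mul_le_mul_of_nonneg_left h3 hρpos.le
    linarith [hcl, h1, h2, hmul]
  -- radius and compact slice
  set R : ℝ := (G 0 - Real.log m) / ρ + 1 with hRdef
  have hG0 : Real.log m ≤ G 0 := by simpa using coercive 0 rfl x₀
  have hRpos : 0 < R := by
    have h1 : 0 ≤ (G 0 - Real.log m) / ρ := div_nonneg (by linarith) hρpos.le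
    rw [hRdef]; linarith
  set K : Set (X → ℝ) := {f | f x₀ = 0 ∧ ∀ x, |f x| ≤ R} with hKdef
  have hKc : IsCompact K := by
    have hsub : K ⊆ Metric.closedBall 0 R := by
      intro f hf
      simp only [Metric.mem_closedBall, dist_zero_right]
      exact (pi_norm_le_iff_of_nonneg hRpos.le).2 fun x => by simpa using hf.2 x
    refine (isCompact_closedBall 0 R).of_isClosed_subset ?_ hsub
    have : K = {f : X → ℝ | f x₀ = 0} ∩ ⋂ x, {f : X → ℝ | |f x| ≤ R} := by
      ext f; simp [hKdef, Set.mem_iInter]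
    rw [this]
    exact (isClosed_eq (continuous_apply x₀) continuous_const).inter
      (isClosed_iInter fun x => isClosed_le ((continuous_apply x).abs) continuous_const)
  have hK0 : (0 : X → ℝ) ∈ K := ⟨rfl, fun x => by simp [hRpos.le]⟩
  obtain ⟨fm, hfmK, hfmin⟩ := hKc.exists_isMinOn ⟨0, hK0⟩ hGc.continuousOn
  -- invariance of G under adding constants
  have hinv : ∀ (h : X → ℝ) (c : ℝ), G (fun x => h x + c) = G h := by
    intro h c
    have hL : ∀ y : X, Real.log (∑ x : X, M x y * Real.exp (h x + c))
        = Real.log (∑ x : X, M x y * Real.exp (h x)) + c := by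
      intro y
      have hD : ∑ x : X, M x y * Real.exp (h x + c)
          = (∑ x : X, M x y * Real.exp (h x)) * Real.exp c := by
        rw [Finset.sum_mul]
        exact Finset.sum_congr rfl fun x _ => by rw [Real.exp_add]; ring
      rw [hD, Real.log_mul (hDpos y h).ne' (Real.exp_ne_zero c), Real.log_exp]
    simp only [hGdef]
    calc (∑ y : X, r y * Real.log (∑ x : X, M x y * Real.exp (h x + c)))
          - ∑ x : X, r x * (h x + c)
        = (∑ y : X, (r y * Real.log (∑ x : X, M x y * Real.exp (h x)) + r y * c))
          - ∑ x : X, (r x * h x + r x * c) := by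
          refine congrArg₂ _ (Finset.sum_congr rfl fun y _ => ?_)
            (Finset.sum_congr rfl fun x _ => ?_)
          · rw [hL y]; ring
          · ring
      _ = _ := by
          rw [Finset.sum_add_distrib, Finset.sum_add_distrib, ← Finset.sum_mul, hrsum]
          ring
  -- fm is a global minimum of G
  have hglob : ∀ h : X → ℝ, G fm ≤ G h := by
    intro h
    have hEq : G h = G (fun x => h x - h x₀) := by
      conv_lhs => rw [show h = (fun x => (h x - h x₀) + h x₀) from funext fun x => by ring]
      exact hinv (fun x => h x - h x₀) (h x₀)
    by_cases hcase : ∀ x, |h x - h x₀| ≤ R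
    · exact hEq ▸ hfmin ⟨by simp, hcase⟩
    · push_neg at hcase
      obtain ⟨x, hx⟩ := hcase
      have hco := coercive (fun z => h z - h x₀) (by simp) x
      have h0 : G fm ≤ G 0 := hfmin hK0
      have hlt : ρ * R < ρ * |h x - h x₀| := mul_lt_mul_of_pos_left hx hρpos
      have hRρ : ρ * R = (G 0 - Real.log m) + ρ := by
        rw [hRdef, mul_add, mul_one, mul_div_cancel₀ _ hρpos.ne']
      rw [hEq]
      linarith
  -- first-order conditions at fm
  refine ⟨fm, fun x' => ?_⟩
  set ind : X → ℝ := fun x => if x = x' then (1:ℝ) else 0 with hinddef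
  have hmin : IsLocalMin (fun t : ℝ => G (fun x => fm x + t * ind x)) 0 := by
    apply Filter.Eventually.of_forall
    intro t
    show G (fun x => fm x + (0:ℝ) * ind x) ≤ _
    rw [show (fun x => fm x + (0:ℝ) * ind x) = fm from funext fun x => by ring]
    exact hglob _
  have hderiv : HasDerivAt (fun t : ℝ => G (fun x => fm x + t * ind x))
      ((∑ y : X, r y * ((∑ x : X, M x y * (ind x * Real.exp (fm x + 0 * ind x))) /
          (∑ x : X, M x y * Real.exp (fm x + 0 * ind x))))
        - ∑ x : X, r x * ind x) 0 := by
    simp only [hGdef]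
    have harg : ∀ x : X, HasDerivAt (fun t : ℝ => fm x + t * ind x) (ind x) 0 := by
      intro x
      simpa using ((hasDerivAt_id (0:ℝ)).mul_const (ind x)).const_add (fm x)
    apply HasDerivAt.sub
    · apply HasDerivAt.fun_sum
      intro y _
      refine HasDerivAt.const_mul _ ?_
      refine HasDerivAt.log ?_ (hDpos y (fun x => fm x + 0 * ind x)).ne'
      apply HasDerivAt.fun_sum
      intro x _
      have := ((harg x).exp).const_mul (M x y)
      convert this using 1
      exacts [rfl, by ring]
    · apply HasDerivAt.fun_sum
      intro x _
      simpa using (harg x).const_mul (r x)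
  have hzero := hmin.hasDerivAt_eq_zero hderiv
  simp only [zero_mul, add_zero, hinddef, mul_ite, ite_mul, one_mul, mul_zero, mul_one, ite_self,
    Finset.sum_ite_eq', mem_univ, if_true] at hzero
  have := sub_eq_zero.1 hzero
  simpa only [hMdef, ite_self, add_zero] using this

/-- existence of the minimum information Markov kernel
generated by a dependence function H and a marginal r. -/
theorem stmt_15 {X : Type*} [Fintype X] [Nonempty X] (H : X → X → ℝ)
    (r : X → ℝ) (hr : ∀ x : X, 0 < r x) (hrsum : ∑ x : X, r x = 1) :
    ∃ (κ δ : X → ℝ),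
      (∀ x : X, ∑ y : X, Real.exp (H x y + κ y - κ x - δ y) = 1) ∧
      ∀ y : X, ∑ x : X, Real.exp (H x y + κ y - κ x - δ y) * r x = r y := by
    classical
  obtain ⟨f, hf⟩ := aux_scaling H r hr hrsum
  have hDpos : ∀ y : X, 0 < ∑ x : X, r x * Real.exp (H x y) * Real.exp (f x) := fun y =>
    Finset.sum_pos
      (fun x _ => mul_pos (mul_pos (hr x) (Real.exp_pos _)) (Real.exp_pos _)) univ_nonempty
  refine ⟨fun x => -f x,
    fun y => -f y - Real.log (r y) +
      Real.log (∑ x : X, r x * Real.exp (H x y) * Real.exp (f x)), ?_, ?_⟩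
  all_goals
    have hw : ∀ x y : X,
        Real.exp (H x y + (-f y) - (-f x) - (-f y - Real.log (r y) +
            Real.log (∑ x' : X, r x' * Real.exp (H x' y) * Real.exp (f x'))))
        = Real.exp (H x y) * Real.exp (f x) *
            (r y / ∑ x' : X, r x' * Real.exp (H x' y) * Real.exp (f x')) := by
      intro x y
      have he : H x y + (-f y) - (-f x) - (-f y - Real.log (r y) +
            Real.log (∑ x' : X, r x' * Real.exp (H x' y) * Real.exp (f x')))
          = (H x y + f x + Real.log (r y)) -
            Real.log (∑ x' : X, r x' * Real.exp (H x' y) * Real.exp (f x')) := by ring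
      rw [he, Real.exp_sub, Real.exp_add, Real.exp_add, Real.exp_log (hr y),
        Real.exp_log (hDpos y)]
      ring
  · intro x
    rw [Finset.sum_congr rfl fun y _ => hw x y]
    have h2 : r x * ∑ y : X, Real.exp (H x y) * Real.exp (f x) *
          (r y / ∑ x' : X, r x' * Real.exp (H x' y) * Real.exp (f x'))
        = ∑ y : X, r y * ((r x * Real.exp (H x y) * Real.exp (f x)) /
            ∑ x' : X, r x' * Real.exp (H x' y) * Real.exp (f x')) := by
      rw [Finset.mul_sum]
      exact Finset.sum_congr rfl fun y _ => by ring
    have h3 : r x * (∑ y : X, Real.exp (H x y) * Real.exp (f x) *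
          (r y / ∑ x' : X, r x' * Real.exp (H x' y) * Real.exp (f x'))) = r x * 1 := by
      rw [h2, hf x, mul_one]
    exact mul_left_cancel₀ (hr x).ne' h3
  · intro y
    rw [Finset.sum_congr rfl fun x _ => by rw [hw x y]]
    have h2 : ∑ x : X, Real.exp (H x y) * Real.exp (f x) *
          (r y / ∑ x' : X, r x' * Real.exp (H x' y) * Real.exp (f x')) * r x
        = (r y / ∑ x' : X, r x' * Real.exp (H x' y) * Real.exp (f x')) *
          ∑ x : X, r x * Real.exp (H x y) * Real.exp (f x) := by
      rw [Finset.mul_sum]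
      exact Finset.sum_congr rfl fun x _ => by ring
    rw [h2, div_mul_cancel₀ _ (hDpos y).ne']
end
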